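/- Let q ≥ 1, L ≥ 1, and let V be a complex matrix indexed by (Fin L → Fin q) (a matrix on the L-qudit Hilbert space of dimension q^L). Let u_1, …, u_L be independent Haar-random elements of the unitary group U(q), and let u_1 ⊗ ⋯ ⊗ u_L denote the matrix ((a,b) ↦ ∏_i (u_i)_{a_i b_i}). Then the ensemble-averaged spectral form factor satisfies E[ |Tr(V · (u_1 ⊗ ⋯ ⊗ u_L))|² ] = Tr(V V†)/q^L. In particular, if V is unitary then this average equals 1, i.e. the spectral form factor of a temporal-random quantum circuit without symmetries is exactly unity. -/

import Mathlib

open Matrix MeasureTheory BigOperators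

noncomputable instance matrixMeasurableSpace (m n : Type*) :
    MeasurableSpace (Matrix m n ℂ) := by
  unfold Matrix; infer_instance

section aux
variable {q : ℕ}

lemma measurable_entry (i j : Fin q) :
    Measurable (fun w : unitaryGroup (Fin q) ℂ => (w : Matrix (Fin q) (Fin q) ℂ) i j) := by
  have h1 : Measurable ((↑) : unitaryGroup (Fin q) ℂ → Matrix (Fin q) (Fin q) ℂ) :=
    measurable_subtype_coe
  exact (measurable_pi_apply j).comp ((measurable_pi_apply i).comp h1)

instance : MeasurableMul (unitaryGroup (Fin q) ℂ) where
  measurable_const_mul c := by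
    apply Measurable.subtype_mk
    show Measurable fun w : unitaryGroup (Fin q) ℂ =>
      ((c : Matrix (Fin q) (Fin q) ℂ) * (w : Matrix (Fin q) (Fin q) ℂ))
    apply measurable_pi_lambda; intro i
    apply measurable_pi_lambda; intro j
    show Measurable fun w : unitaryGroup (Fin q) ℂ =>
      ∑ k, (c : Matrix (Fin q) (Fin q) ℂ) i k * (w : Matrix (Fin q) (Fin q) ℂ) k j
    exact Finset.measurable_sum _ fun k _ => (measurable_entry k j).const_mul _
  measurable_mul_const c := by
    apply Measurable.subtype_mk
    show Measurable fun w : unitaryGroup (Fin q) ℂ =>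
      ((w : Matrix (Fin q) (Fin q) ℂ) * (c : Matrix (Fin q) (Fin q) ℂ))
    apply measurable_pi_lambda; intro i
    apply measurable_pi_lambda; intro j
    show Measurable fun w : unitaryGroup (Fin q) ℂ =>
      ∑ k, (w : Matrix (Fin q) (Fin q) ℂ) i k * (c : Matrix (Fin q) (Fin q) ℂ) k j
    exact Finset.measurable_sum _ fun k _ => (measurable_entry i k).mul_const _

lemma entry_normSq_le (w : unitaryGroup (Fin q) ℂ) (i j : Fin q) :
    ‖(w : Matrix (Fin q) (Fin q) ℂ) i j‖ ≤ 1 := by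
  have h : star (w : Matrix (Fin q) (Fin q) ℂ) * w = 1 :=
    (mem_unitaryGroup_iff'.mp w.2)
  have h2 := congrFun (congrFun h j) j
  simp only [Matrix.mul_apply, Matrix.one_apply_eq, Matrix.star_apply] at h2
  have h2' : ∑ k, ((Complex.normSq ((w : Matrix (Fin q) (Fin q) ℂ) k j) : ℂ)) = 1 := by
    rw [← h2]
    refine Finset.sum_congr rfl fun k _ => ?_
    rw [Complex.star_def, mul_comm, Complex.mul_conj]
  have h3 : ∑ k, Complex.normSq ((w : Matrix (Fin q) (Fin q) ℂ) k j) = 1 := by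
    exact_mod_cast h2' 
  have h4 : Complex.normSq ((w : Matrix (Fin q) (Fin q) ℂ) i j) ≤ 1 := by
    rw [← h3]
    exact Finset.single_le_sum
      (f := fun k => Complex.normSq ((w : Matrix (Fin q) (Fin q) ℂ) k j))
      (fun k _ => Complex.normSq_nonneg _) (Finset.mem_univ i)
  rw [← Complex.sq_norm] at h4
  nlinarith [norm_nonneg ((w : Matrix (Fin q) (Fin q) ℂ) i j)]

end aux

section moment
variable {q : ℕ} (μ : Measure (unitaryGroup (Fin q) ℂ)) [μ.IsHaarMeasure] [IsProbabilityMeasure μ]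

local notation "G" => unitaryGroup (Fin q) ℂ

lemma integrable_entry_mul (i j k l : Fin q) :
    Integrable (fun u : G => (u : Matrix (Fin q) (Fin q) ℂ) i j *
      (starRingEnd ℂ) ((u : Matrix (Fin q) (Fin q) ℂ) k l)) μ := by
  refine Integrable.mono' (integrable_const 1) ?_ ?_
  · exact ((measurable_entry i j).mul (Complex.continuous_conj.measurable.comp (measurable_entry k l))).aestronglyMeasurable
  · filter_upwards with u
    rw [norm_mul]
    calc ‖(u : Matrix (Fin q) (Fin q) ℂ) i j‖ * ‖(starRingEnd ℂ) ((u : Matrix (Fin q) (Fin q) ℂ) k l)‖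
        ≤ 1 * 1 := by
          apply mul_le_mul ?_ ?_ (norm_nonneg _) zero_le_one
          · exact entry_normSq_le u i j
          · rw [RCLike.norm_conj]; exact entry_normSq_le u k l
      _ = 1 := by ring

/-- permutation matrices are unitary -/
lemma perm_mem_unitary (σ : Equiv.Perm (Fin q)) :
    (Matrix.of fun m n => if σ m = n then (1:ℂ) else 0) ∈ unitaryGroup (Fin q) ℂ := by
  constructor
  · ext n n'
    simp only [Matrix.mul_apply, Matrix.star_apply, Matrix.of_apply,
      apply_ite (star : ℂ → ℂ), star_one, star_zero]
    rw [Fintype.sum_equiv σ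
      (fun m => (if σ m = n then (1:ℂ) else 0) * (if σ m = n' then (1:ℂ) else 0))
      (fun x => (if x = n then (1:ℂ) else 0) * (if x = n' then (1:ℂ) else 0))
      (fun x => rfl)]
    simp [Matrix.one_apply, ite_mul, Finset.sum_ite_eq, eq_comm]
  · ext m m'
    simp only [Matrix.mul_apply, Matrix.star_apply, Matrix.of_apply,
      apply_ite (star : ℂ → ℂ), star_one, star_zero]
    simp [Matrix.one_apply, ite_mul, mul_ite, Finset.sum_ite_eq, σ.injective.eq_iff]

lemma perm_mul_apply (σ : Equiv.Perm (Fin q)) (u : G) (m jj : Fin q) :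
    (((⟨Matrix.of fun m n => if σ m = n then (1:ℂ) else 0, perm_mem_unitary σ⟩ : G) * u :
      G) : Matrix (Fin q) (Fin q) ℂ) m jj = (u : Matrix (Fin q) (Fin q) ℂ) (σ m) jj := by
  show ((Matrix.of fun m n => if σ m = n then (1:ℂ) else 0) *
    (u : Matrix (Fin q) (Fin q) ℂ)) m jj = _
  simp [Matrix.mul_apply, ite_mul, Finset.sum_ite_eq]

lemma moment_offdiag (i j k l : Fin q) (hik : i ≠ k) :
    (∫ u : G, (u : Matrix (Fin q) (Fin q) ℂ) i j *
      (starRingEnd ℂ) ((u : Matrix (Fin q) (Fin q) ℂ) k l) ∂μ) = 0 := by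
  classical
  set z : Fin q → ℂ := fun m => if m = i then -1 else 1 with hz
  have hD : (diagonal z) ∈ unitaryGroup (Fin q) ℂ := by
    rw [mem_unitaryGroup_iff, star_eq_conjTranspose, diagonal_conjTranspose, diagonal_mul_diagonal]
    have h1 : (fun m => z m * star z m) = fun _ => (1:ℂ) := by
      funext m
      by_cases hm : m = i <;> simp [hz, hm, Pi.star_apply]
    rw [h1, diagonal_one]
  set D : G := ⟨diagonal z, hD⟩ with hDdef
  have key := integral_mul_left_eq_self (μ := μ)
    (fun u : G => (u : Matrix (Fin q) (Fin q) ℂ) i j *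
      (starRingEnd ℂ) ((u : Matrix (Fin q) (Fin q) ℂ) k l)) D
  have hcoe : ∀ u : G, ((D * u : G) : Matrix (Fin q) (Fin q) ℂ) = diagonal z * u := fun u => rfl
  simp only [hcoe, diagonal_mul] at key
  have : ∀ u : G, z i * (u : Matrix (Fin q) (Fin q) ℂ) i j *
      (starRingEnd ℂ) (z k * (u : Matrix (Fin q) (Fin q) ℂ) k l)
      = -((u : Matrix (Fin q) (Fin q) ℂ) i j *
        (starRingEnd ℂ) ((u : Matrix (Fin q) (Fin q) ℂ) k l)) := by
    intro u
    have hzi : z i = -1 := by simp [hz]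
    have hzk : z k = 1 := by simp [hz, (Ne.symm hik)]
    rw [hzi, hzk, one_mul]
    ring
  simp only [this, integral_neg] at key
  linear_combination (-1/2 : ℂ) * key

lemma moment (i j k l : Fin q) :
    (∫ u : G, (u : Matrix (Fin q) (Fin q) ℂ) i j *
      (starRingEnd ℂ) ((u : Matrix (Fin q) (Fin q) ℂ) k l) ∂μ)
      = if i = k ∧ j = l then (1 / (q:ℂ)) else 0 := by
  classical
  by_cases hik : i = k
  · subst hik
    have hswap : ∀ i' : Fin q,
        (∫ u : G, (u : Matrix (Fin q) (Fin q) ℂ) i' j *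
          (starRingEnd ℂ) ((u : Matrix (Fin q) (Fin q) ℂ) i' l) ∂μ)
        = ∫ u : G, (u : Matrix (Fin q) (Fin q) ℂ) i j *
          (starRingEnd ℂ) ((u : Matrix (Fin q) (Fin q) ℂ) i l) ∂μ := by
      intro i'
      have key := integral_mul_left_eq_self (μ := μ)
        (fun u : G => (u : Matrix (Fin q) (Fin q) ℂ) i' j *
          (starRingEnd ℂ) ((u : Matrix (Fin q) (Fin q) ℂ) i' l))
        ⟨Matrix.of fun m n => if (Equiv.swap i i') m = n then (1:ℂ) else 0,
          perm_mem_unitary (Equiv.swap i i')⟩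
      simp only [perm_mul_apply, Equiv.swap_apply_right] at key
      exact key.symm
    have hsum : (∑ i' : Fin q, ∫ u : G, (u : Matrix (Fin q) (Fin q) ℂ) i' j *
        (starRingEnd ℂ) ((u : Matrix (Fin q) (Fin q) ℂ) i' l) ∂μ)
        = if j = l then 1 else 0 := by
      rw [← integral_finset_sum _ (fun i' _ => integrable_entry_mul μ i' j i' l)]
      have hone : ∀ u : G, (∑ i' : Fin q, (u : Matrix (Fin q) (Fin q) ℂ) i' j *
          (starRingEnd ℂ) ((u : Matrix (Fin q) (Fin q) ℂ) i' l))
          = if j = l then 1 else 0 := by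
        intro u
        have h := mem_unitaryGroup_iff'.mp u.2
        have h2 := congrFun (congrFun h l) j
        simp only [Matrix.mul_apply, Matrix.star_apply, Matrix.one_apply] at h2
        rw [show (if j = l then (1:ℂ) else 0) = if l = j then 1 else 0 by
          simp [eq_comm], ← h2]
        refine Finset.sum_congr rfl fun m _ => ?_
        rw [mul_comm]
        rfl
      simp_rw [hone]
      simp
    have hcard : ((q : ℂ)) * (∫ u : G, (u : Matrix (Fin q) (Fin q) ℂ) i j *
        (starRingEnd ℂ) ((u : Matrix (Fin q) (Fin q) ℂ) i l) ∂μ)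
        = if j = l then 1 else 0 := by
      rw [← hsum, Finset.sum_congr rfl (fun i' _ => hswap i'), Finset.sum_const,
        Finset.card_univ, Fintype.card_fin, nsmul_eq_mul]
    have hq0 : (q : ℂ) ≠ 0 := Nat.cast_ne_zero.2 i.pos.ne'
    simp only [true_and]
    rcases eq_or_ne j l with h | h
    · simp only [h, if_true] at hcard ⊢
      rw [eq_div_iff hq0, mul_comm]
      exact hcard
    · simp only [h, if_false] at hcard ⊢
      exact (mul_eq_zero.mp hcard).resolve_left hq0
  · simp only [hik, false_and, if_false]
    exact moment_offdiag μ i j k l hik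

lemma prod_integrand_bound {L : ℕ} (u : Fin L → G) (bb aa dd cc : Fin L → Fin q) :
    ‖∏ i : Fin L, ((u i : Matrix (Fin q) (Fin q) ℂ) (bb i) (aa i) *
        (starRingEnd ℂ) ((u i : Matrix (Fin q) (Fin q) ℂ) (dd i) (cc i)))‖ ≤ 1 := by
  rw [norm_prod]
  refine Finset.prod_le_one (fun i _ => norm_nonneg _) (fun i _ => ?_)
  rw [norm_mul, RCLike.norm_conj]
  calc ‖(u i : Matrix (Fin q) (Fin q) ℂ) (bb i) (aa i)‖ *
        ‖(u i : Matrix (Fin q) (Fin q) ℂ) (dd i) (cc i)‖ ≤ 1 * 1 :=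
      mul_le_mul (entry_normSq_le _ _ _) (entry_normSq_le _ _ _) (norm_nonneg _) zero_le_one
    _ = 1 := by ring

lemma integrable_entry_prod {L : ℕ} (c : ℂ) (bb aa dd cc : Fin L → Fin q) :
    Integrable (fun u : Fin L → G => c * ∏ i : Fin L,
      ((u i : Matrix (Fin q) (Fin q) ℂ) (bb i) (aa i) *
        (starRingEnd ℂ) ((u i : Matrix (Fin q) (Fin q) ℂ) (dd i) (cc i))))
      (Measure.pi fun _ : Fin L => μ) := by
  apply Integrable.const_mul
  refine Integrable.mono' (integrable_const 1) ?_ ?_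
  · refine (Finset.measurable_prod Finset.univ fun i _ => ?_).aestronglyMeasurable
    exact ((measurable_entry (bb i) (aa i)).comp (measurable_pi_apply i)).mul
      ((Complex.continuous_conj.measurable.comp
        ((measurable_entry (dd i) (cc i)).comp (measurable_pi_apply i))))
  · filter_upwards with u
    exact prod_integrand_bound u bb aa dd cc

end moment

/-- Averaging over a layer of independent single-site Haar-random
(CUE) unitaries `u₁ ⊗ ⋯ ⊗ u_L`, the spectral form factor of `V · (u₁ ⊗ ⋯ ⊗ u_L)` is
`Tr(V V†)/q^L`; in particular it is exactly `1` when `V` is unitary. -/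
theorem sff_temporal_random_no_sym (q L : ℕ) (hq : 1 ≤ q) (hL : 1 ≤ L)
    (μ : Measure (unitaryGroup (Fin q) ℂ)) [μ.IsHaarMeasure] [IsProbabilityMeasure μ]
    (V : Matrix (Fin L → Fin q) (Fin L → Fin q) ℂ) :
    (∫ u : Fin L → unitaryGroup (Fin q) ℂ,
        Complex.normSq
          ((V * Matrix.of fun (a b : Fin L → Fin q) => ∏ i : Fin L,
              ((u i : Matrix (Fin q) (Fin q) ℂ) (a i) (b i))).trace)
        ∂(Measure.pi fun _ : Fin L => μ))
      = ((V * Vᴴ).trace).re / (q : ℝ) ^ L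
    ∧ (V ∈ unitaryGroup (Fin L → Fin q) ℂ →
        (∫ u : Fin L → unitaryGroup (Fin q) ℂ,
            Complex.normSq
              ((V * Matrix.of fun (a b : Fin L → Fin q) => ∏ i : Fin L,
                  ((u i : Matrix (Fin q) (Fin q) ℂ) (a i) (b i))).trace)
            ∂(Measure.pi fun _ : Fin L => μ)) = 1) := by
  classical
  letI : MeasureSpace (unitaryGroup (Fin q) ℂ) := ⟨μ⟩
  have hqR : ((q : ℝ)) ^ L ≠ 0 := pow_ne_zero _ (Nat.cast_ne_zero.2 (by omega))
  set f : (Fin L → unitaryGroup (Fin q) ℂ) → ℂ := fun u =>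
    (V * Matrix.of fun (a b : Fin L → Fin q) => ∏ i : Fin L,
      ((u i : Matrix (Fin q) (Fin q) ℂ) (a i) (b i))).trace with hfdef
  -- expansion of the trace
  have hf : ∀ u, f u = ∑ p : (Fin L → Fin q) × (Fin L → Fin q),
      V p.1 p.2 * ∏ i : Fin L, ((u i : Matrix (Fin q) (Fin q) ℂ) (p.2 i) (p.1 i)) := by
    intro u
    rw [Fintype.sum_prod_type, hfdef]
    simp only [Matrix.trace, Matrix.diag, Matrix.mul_apply, Matrix.of_apply]
  -- single term integral
  have hterm : ∀ p p' : (Fin L → Fin q) × (Fin L → Fin q),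
      (∫ u : Fin L → unitaryGroup (Fin q) ℂ, ∏ i : Fin L,
        ((u i : Matrix (Fin q) (Fin q) ℂ) (p.2 i) (p.1 i) *
          (starRingEnd ℂ) ((u i : Matrix (Fin q) (Fin q) ℂ) (p'.2 i) (p'.1 i)))
        ∂(Measure.pi fun _ : Fin L => μ))
      = if p = p' then (1 / (q:ℂ)) ^ L else 0 := by
    intro p p'
    rw [show (Measure.pi fun _ : Fin L => μ) = volume from rfl]
    erw [integral_fintype_prod_eq_prod (μ := fun _ => (volume : Measure (unitaryGroup (Fin q) ℂ)))
      (f := fun i (w : unitaryGroup (Fin q) ℂ) => (w : Matrix (Fin q) (Fin q) ℂ) (p.2 i) (p.1 i) *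
        (starRingEnd ℂ) ((w : Matrix (Fin q) (Fin q) ℂ) (p'.2 i) (p'.1 i)))]
    have hsite : ∀ i : Fin L, (∫ w : unitaryGroup (Fin q) ℂ,
        (w : Matrix (Fin q) (Fin q) ℂ) (p.2 i) (p.1 i) *
          (starRingEnd ℂ) ((w : Matrix (Fin q) (Fin q) ℂ) (p'.2 i) (p'.1 i)))
        = if p.2 i = p'.2 i ∧ p.1 i = p'.1 i then (1 / (q:ℂ)) else 0 :=
      fun i => moment μ (p.2 i) (p.1 i) (p'.2 i) (p'.1 i)
    rw [Finset.prod_congr rfl fun i _ => hsite i]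
    by_cases hpp : p = p'
    · subst hpp
      simp [Finset.prod_const]
    · rw [if_neg hpp]
      have : ∃ i, ¬(p.2 i = p'.2 i ∧ p.1 i = p'.1 i) := by
        by_contra h
        push_neg at h
        exact hpp (Prod.ext (funext fun i => (h i).2) (funext fun i => (h i).1))
      obtain ⟨i, hi⟩ := this
      exact Finset.prod_eq_zero (Finset.mem_univ i) (if_neg hi)
  -- the complex-valued average
  have hC : (∫ u : Fin L → unitaryGroup (Fin q) ℂ, f u * (starRingEnd ℂ) (f u)
        ∂(Measure.pi fun _ : Fin L => μ))
      = (1 / (q:ℂ)) ^ L * ∑ p : (Fin L → Fin q) × (Fin L → Fin q),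
          V p.1 p.2 * (starRingEnd ℂ) (V p.1 p.2) := by
    have expand : ∀ u, f u * (starRingEnd ℂ) (f u)
        = ∑ p : (Fin L → Fin q) × (Fin L → Fin q),
            ∑ p' : (Fin L → Fin q) × (Fin L → Fin q),
            (V p.1 p.2 * (starRingEnd ℂ) (V p'.1 p'.2)) * ∏ i : Fin L,
              ((u i : Matrix (Fin q) (Fin q) ℂ) (p.2 i) (p.1 i) *
                (starRingEnd ℂ) ((u i : Matrix (Fin q) (Fin q) ℂ) (p'.2 i) (p'.1 i))) := by
      intro u
      rw [hf u, map_sum, Finset.sum_mul_sum]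
      refine Finset.sum_congr rfl fun p _ => Finset.sum_congr rfl fun p' _ => ?_
      rw [RingHom.map_mul, map_prod (starRingEnd ℂ), mul_mul_mul_comm, ← Finset.prod_mul_distrib]
    simp_rw [expand]
    rw [integral_finset_sum _ (fun p _ => integrable_finset_sum _
      (fun p' _ => integrable_entry_prod μ _ _ _ _ _))]
    have : ∀ p : (Fin L → Fin q) × (Fin L → Fin q),
        (∫ u : Fin L → unitaryGroup (Fin q) ℂ,
          ∑ p' : (Fin L → Fin q) × (Fin L → Fin q),
            (V p.1 p.2 * (starRingEnd ℂ) (V p'.1 p'.2)) * ∏ i : Fin L,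
              ((u i : Matrix (Fin q) (Fin q) ℂ) (p.2 i) (p.1 i) *
                (starRingEnd ℂ) ((u i : Matrix (Fin q) (Fin q) ℂ) (p'.2 i) (p'.1 i)))
          ∂(Measure.pi fun _ : Fin L => μ))
        = (V p.1 p.2 * (starRingEnd ℂ) (V p.1 p.2)) * (1 / (q:ℂ)) ^ L := by
      intro p
      rw [integral_finset_sum _ (fun p' _ => integrable_entry_prod μ _ _ _ _ _)]
      have : ∀ p' : (Fin L → Fin q) × (Fin L → Fin q),
          (∫ u : Fin L → unitaryGroup (Fin q) ℂ,
            (V p.1 p.2 * (starRingEnd ℂ) (V p'.1 p'.2)) * ∏ i : Fin L,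
              ((u i : Matrix (Fin q) (Fin q) ℂ) (p.2 i) (p.1 i) *
                (starRingEnd ℂ) ((u i : Matrix (Fin q) (Fin q) ℂ) (p'.2 i) (p'.1 i)))
            ∂(Measure.pi fun _ : Fin L => μ))
          = (V p.1 p.2 * (starRingEnd ℂ) (V p'.1 p'.2)) *
              (if p = p' then (1 / (q:ℂ)) ^ L else 0) := by
        intro p'
        rw [integral_const_mul, hterm p p']
      rw [Finset.sum_congr rfl fun p' _ => this p']
      simp [Finset.sum_ite_eq, mul_ite, mul_zero]
    rw [Finset.sum_congr rfl fun p _ => this p, ← Finset.sum_mul, mul_comm]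
  -- pass to real parts
  have hreal : (∫ u : Fin L → unitaryGroup (Fin q) ℂ, Complex.normSq (f u)
        ∂(Measure.pi fun _ : Fin L => μ))
      = (∑ p : (Fin L → Fin q) × (Fin L → Fin q), Complex.normSq (V p.1 p.2)) / (q:ℝ) ^ L := by
    have h0 : (∫ u : Fin L → unitaryGroup (Fin q) ℂ, ((Complex.normSq (f u) : ℝ) : ℂ)
          ∂(Measure.pi fun _ : Fin L => μ))
        = (((∫ u : Fin L → unitaryGroup (Fin q) ℂ, Complex.normSq (f u)
            ∂(Measure.pi fun _ : Fin L => μ)) : ℝ) : ℂ) := integral_ofReal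
    have h1 : ∀ u : Fin L → unitaryGroup (Fin q) ℂ,
        ((Complex.normSq (f u) : ℝ) : ℂ) = f u * (starRingEnd ℂ) (f u) :=
      fun u => (Complex.mul_conj _).symm
    have h2 : (((∫ u : Fin L → unitaryGroup (Fin q) ℂ, Complex.normSq (f u)
          ∂(Measure.pi fun _ : Fin L => μ)) : ℝ) : ℂ)
        = (((∑ p : (Fin L → Fin q) × (Fin L → Fin q), Complex.normSq (V p.1 p.2)) / (q:ℝ) ^ L
            : ℝ) : ℂ) := by
      rw [← h0, integral_congr_ae (Filter.Eventually.of_forall h1), hC]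
      rw [Finset.sum_congr rfl fun p _ => (Complex.mul_conj (V p.1 p.2) : _ = _)]
      push_cast
      field_simp
      ring
    exact_mod_cast h2
  have htrace : ((V * Vᴴ).trace).re
      = ∑ p : (Fin L → Fin q) × (Fin L → Fin q), Complex.normSq (V p.1 p.2) := by
    have h1 : (V * Vᴴ).trace = ∑ p : (Fin L → Fin q) × (Fin L → Fin q),
        ((Complex.normSq (V p.1 p.2) : ℝ) : ℂ) := by
      rw [Matrix.trace, Fintype.sum_prod_type]
      simp only [Matrix.diag, Matrix.mul_apply, Matrix.conjTranspose_apply]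
      refine Finset.sum_congr rfl fun a _ => Finset.sum_congr rfl fun b _ => ?_
      rw [show star (V a b) = (starRingEnd ℂ) (V a b) from rfl, Complex.mul_conj]
    rw [h1, ← Complex.ofReal_sum, Complex.ofReal_re]
  constructor
  · rw [hreal, htrace]
  · intro hV
    have hVV : V * Vᴴ = 1 := by
      rw [← star_eq_conjTranspose]
      exact mem_unitaryGroup_iff.mp hV
    rw [hreal, ← htrace, hVV, Matrix.trace_one]
    simp only [Fintype.card_pi, Fintype.card_fin, Finset.prod_const, Finset.card_univ]
    rw [Complex.natCast_re]
    push_cast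
    rw [div_self hqR]
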